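/- Let G'' = (V, E'') be an undirected multigraph, let N be a further multiset of edges on V, and let G = G'' ∪ N (edge multiset union). Let k ≥ 0 be an integer, let F_1, …, F_m be a maximal spanning forest decomposition (msfd) of order m ≥ k+1 of G'', and let H = (V, N ∪ F_1 ∪ … ∪ F_{k+1}). If λ(H) ≤ k, then λ(G) = λ(H); moreover for any minimum cut (A, V∖A) of H one has λ(A,G) = λ(A,H). -/

import Mathlib

open scoped Classical in
/-- A multigraph on vertex set `V` is modeled by the multiset of its edges,
each an unordered pair of distinct vertices. `mCut M S` is the size of the edge cut
`E_M(S, V∖S)`: the number of edges of `M` (with multiplicity) with one endpoint in `S`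
and the other in `Sᶜ`. -/
noncomputable def mCut {V : Type*} (M : Multiset (Sym2 V)) (S : Set V) : ℕ :=
  Multiset.card (M.filter fun e => ∃ u ∈ S, ∃ v ∈ Sᶜ, e = s(u, v))

/-- The simple graph underlying a multiset of edges. -/
def graphOf {V : Type*} (M : Multiset (Sym2 V)) : SimpleGraph V :=
  SimpleGraph.fromEdgeSet {e | e ∈ M}

/-- A multiset of edges is a forest: no repeated edges, no self-loops, and the
underlying simple graph is acyclic. -/
def IsMForest {V : Type*} (F : Multiset (Sym2 V)) : Prop :=
  F.Nodup ∧ (∀ e ∈ F, ¬e.IsDiag) ∧ (graphOf F).IsAcyclic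

/-- `F` is a maximal spanning forest of the multigraph `R`: a subforest of `R` such that
the endpoints of every edge of `R` lie in the same component of `F`. -/
def IsMaxSpanningForest {V : Type*} (R F : Multiset (Sym2 V)) : Prop :=
  F ≤ R ∧ IsMForest F ∧ ∀ u v : V, s(u, v) ∈ R → (graphOf F).Reachable u v

open scoped Classical in
/-- `F 1, …, F m` is a maximal spanning forest decomposition of order `m` of the
multigraph `M`: the forests decompose `M` (so they are edge-disjoint as sub-multisets
and their union is `M`) and each `F i` is a maximal spanning forest of
`M ∖ (F 1 ∪ … ∪ F (i-1))`. -/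
noncomputable def IsMSFD {V : Type*} (M : Multiset (Sym2 V)) (m : ℕ)
    (F : ℕ → Multiset (Sym2 V)) : Prop :=
  (∑ i ∈ Finset.Icc 1 m, F i) = M ∧
  ∀ i ∈ Finset.Icc 1 m, IsMaxSpanningForest (M - ∑ j ∈ Finset.Icc 1 (i - 1), F j) (F i)

/-- The edge connectivity of the multigraph `M`: the minimum of `λ(S,M)` over all
nonempty proper subsets `S ⊂ V`. -/
noncomputable def mEdgeConn {V : Type*} (M : Multiset (Sym2 V)) : ℕ :=
  sInf {c : ℕ | ∃ S : Set V, S.Nonempty ∧ Sᶜ.Nonempty ∧ mCut M S = c}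

/-!
A cut with at most `k` edges of `F 1 + ⋯ + F (k+1)` misses some `F i` entirely (pigeonhole).
Since `F i` is a maximal spanning forest of `F i + ⋯ + F m`, the endpoints of every edge there
are joined in `F i`, so the cut misses all of `F i, …, F m` and has the same size in `G''` as in
`F 1 + ⋯ + F (k+1)`. As `λ(H) ≤ k`, every minimum cut of `H` is of this kind, which gives
`λ(G) ≤ λ(H)`; the reverse inequality holds because `H ≤ G`.
-/

open scoped Classical

section Cut

variable {V : Type*}

lemma mCut_add (M M' : Multiset (Sym2 V)) (S : Set V) :
    mCut (M + M') S = mCut M S + mCut M' S := by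
  simp [mCut, Multiset.filter_add]

lemma mCut_sum {ι : Type*} (s : Finset ι) (f : ι → Multiset (Sym2 V)) (S : Set V) :
    mCut (∑ i ∈ s, f i) S = ∑ i ∈ s, mCut (f i) S := by
  induction s using Finset.cons_induction with
  | empty => simp [mCut]
  | cons a s ha ih => rw [Finset.sum_cons, Finset.sum_cons, mCut_add, ih]

lemma mCut_mono {M M' : Multiset (Sym2 V)} (h : M ≤ M') (S : Set V) :
    mCut M S ≤ mCut M' S :=
  Multiset.card_le_card (Multiset.filter_le_filter _ h)

lemma mem_iff_of_reachable_of_mCut_eq_zero {F : Multiset (Sym2 V)} {S : Set V}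
    (h0 : mCut F S = 0) {u v : V} (h : (graphOf F).Reachable u v) : u ∈ S ↔ v ∈ S := by
  rw [mCut, Multiset.card_eq_zero, Multiset.filter_eq_nil] at h0
  obtain ⟨w⟩ := h
  induction w with
  | nil => rfl
  | @cons a b _ hab _ ih =>
    have hmem : s(a, b) ∈ F := ((SimpleGraph.fromEdgeSet_adj _).mp hab).1
    refine Iff.trans ⟨fun ha => ?_, fun hb => ?_⟩ ih <;> by_contra hn
    · exact h0 _ hmem ⟨a, ha, b, hn, rfl⟩
    · exact h0 _ hmem ⟨b, hb, a, hn, Sym2.eq_swap⟩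

lemma IsMaxSpanningForest.mCut_eq_zero {R F : Multiset (Sym2 V)} (hF : IsMaxSpanningForest R F)
    {S : Set V} (h0 : mCut F S = 0) : mCut R S = 0 := by
  rw [mCut, Multiset.card_eq_zero, Multiset.filter_eq_nil]
  rintro e he ⟨u, hu, v, hv, rfl⟩
  exact hv ((mem_iff_of_reachable_of_mCut_eq_zero h0 (hF.2.2 u v he)).mp hu)

end Cut

namespace IsMSFD

variable {V : Type*} {M : Multiset (Sym2 V)} {m : ℕ} {F : ℕ → Multiset (Sym2 V)}

lemma mCut_eq_zero_of_le (hF : IsMSFD M m F) {S : Set V} {i j : ℕ} (hi : 1 ≤ i)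
    (h0 : mCut (F i) S = 0) (hij : i ≤ j) (hjm : j ≤ m) : mCut (F j) S = 0 := by
  have hj : j ∉ Finset.Icc 1 (i - 1) := by simp only [Finset.mem_Icc]; omega
  have hprefix : (∑ l ∈ Finset.Icc 1 (i - 1), F l) + F j ≤ M := by
    rw [add_comm, ← Finset.sum_insert hj, ← hF.1]
    refine Finset.sum_le_sum_of_subset fun l hl => ?_
    simp only [Finset.mem_insert, Finset.mem_Icc] at hl ⊢
    omega
  have hrest := (hF.2 i (Finset.mem_Icc.mpr ⟨hi, hij.trans hjm⟩)).mCut_eq_zero h0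
  exact Nat.eq_zero_of_le_zero (hrest ▸ mCut_mono (le_tsub_of_add_le_left hprefix) S)

lemma mCut_eq_of_mCut_sum_le (hF : IsMSFD M m F) {k : ℕ} (hkm : k + 1 ≤ m) {S : Set V}
    (hS : mCut (∑ i ∈ Finset.Icc 1 (k + 1), F i) S ≤ k) :
    mCut M S = mCut (∑ i ∈ Finset.Icc 1 (k + 1), F i) S := by
  obtain ⟨i, hi, h0⟩ : ∃ i ∈ Finset.Icc 1 (k + 1), mCut (F i) S < 1 := by
    refine Finset.exists_lt_of_sum_lt ?_
    rw [← mCut_sum]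
    simpa using Nat.lt_succ_of_le hS
  rw [Finset.mem_Icc] at hi
  rw [← hF.1, mCut_sum, mCut_sum]
  refine (Finset.sum_subset (Finset.Icc_subset_Icc_right hkm) fun j hj hj' => ?_).symm
  simp only [Finset.mem_Icc] at hj hj'
  exact hF.mCut_eq_zero_of_le hi.1 (Nat.lt_one_iff.mp h0) (by omega) hj.2

end IsMSFD

section EdgeConn

variable {V : Type*}

lemma mEdgeConn_le_mCut (M : Multiset (Sym2 V)) {S : Set V} (hS : S.Nonempty)
    (hSc : Sᶜ.Nonempty) : mEdgeConn M ≤ mCut M S :=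
  Nat.sInf_le ⟨S, hS, hSc, rfl⟩

lemma exists_mCut_eq_mEdgeConn (M : Multiset (Sym2 V))
    (h : ∃ S : Set V, S.Nonempty ∧ Sᶜ.Nonempty) :
    ∃ A : Set V, A.Nonempty ∧ Aᶜ.Nonempty ∧ mCut M A = mEdgeConn M := by
  obtain ⟨S, hS, hSc⟩ := h
  exact Nat.sInf_mem (s := {c | ∃ S : Set V, S.Nonempty ∧ Sᶜ.Nonempty ∧ mCut M S = c})
    ⟨_, S, hS, hSc, rfl⟩

lemma mEdgeConn_eq_zero (M : Multiset (Sym2 V)) (h : ¬∃ S : Set V, S.Nonempty ∧ Sᶜ.Nonempty) :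
    mEdgeConn M = 0 := by
  rw [mEdgeConn, Nat.sInf_eq_zero]
  right
  exact Set.eq_empty_of_forall_notMem fun _ ⟨S, hS, hSc, _⟩ => h ⟨S, hS, hSc⟩

lemma mEdgeConn_eq_of_le {H G : Multiset (Sym2 V)} (hle : H ≤ G)
    (hmin : ∀ A : Set V, A.Nonempty → Aᶜ.Nonempty → mCut H A = mEdgeConn H →
      mCut G A = mCut H A) :
    mEdgeConn G = mEdgeConn H := by
  by_cases h : ∃ S : Set V, S.Nonempty ∧ Sᶜ.Nonempty
  · obtain ⟨A, hA, hAc, hHA⟩ := exists_mCut_eq_mEdgeConn H h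
    obtain ⟨B, hB, hBc, hGB⟩ := exists_mCut_eq_mEdgeConn G h
    apply le_antisymm
    · calc mEdgeConn G ≤ mCut G A := mEdgeConn_le_mCut G hA hAc
        _ = mEdgeConn H := (hmin A hA hAc hHA).trans hHA
    · calc mEdgeConn H ≤ mCut H B := mEdgeConn_le_mCut H hB hBc
        _ ≤ mCut G B := mCut_mono hle B
        _ = mEdgeConn G := hGB
  · rw [mEdgeConn_eq_zero G h, mEdgeConn_eq_zero H h]

end EdgeConn

open scoped Classical in
theorem msfd_edgeConn_eq_general {V : Type*} (G'' N : Multiset (Sym2 V))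
    (k m : ℕ) (hm : k + 1 ≤ m) (F : ℕ → Multiset (Sym2 V))
    (hF : IsMSFD G'' m F)
    (hsmall : mEdgeConn (N + ∑ i ∈ Finset.Icc 1 (k + 1), F i) ≤ k) :
    mEdgeConn (G'' + N) = mEdgeConn (N + ∑ i ∈ Finset.Icc 1 (k + 1), F i) ∧
    ∀ A : Set V, A.Nonempty → Aᶜ.Nonempty →
      mCut (N + ∑ i ∈ Finset.Icc 1 (k + 1), F i) A =
        mEdgeConn (N + ∑ i ∈ Finset.Icc 1 (k + 1), F i) →
      mCut (G'' + N) A = mCut (N + ∑ i ∈ Finset.Icc 1 (k + 1), F i) A := by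
  set T := ∑ i ∈ Finset.Icc 1 (k + 1), F i
  have hmin : ∀ A : Set V, A.Nonempty → Aᶜ.Nonempty → mCut (N + T) A = mEdgeConn (N + T) →
      mCut (G'' + N) A = mCut (N + T) A := by
    intro A _ _ hA
    have hTA : mCut T A ≤ k := by rw [mCut_add] at hA; omega
    rw [mCut_add, mCut_add, hF.mCut_eq_of_mCut_sum_le hm hTA, add_comm]
  have hle : N + T ≤ G'' + N := by
    rw [add_comm G'' N, ← hF.1]
    exact add_le_add_right (Finset.sum_le_sum_of_subset (Finset.Icc_subset_Icc_right hm)) N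
  exact ⟨mEdgeConn_eq_of_le hle hmin, hmin⟩

open scoped Classical in
/-- Let `G'' ` be a multigraph, `N` a further multiset of edges, `G = G'' ∪ N`, `k ≥ 0`,
let `F 1, …, F m` be an msfd of order `m ≥ k + 1` of `G''`, and let
`H = N ∪ F 1 ∪ … ∪ F (k+1)`. If `λ(H) ≤ k`, then `λ(G) = λ(H)`; moreover for any
minimum cut `(A, V∖A)` of `H` one has `λ(A,G) = λ(A,H)`. -/
theorem msfd_edgeConn_eq {V : Type*} [Fintype V] (G'' N : Multiset (Sym2 V))
    (hG'' : ∀ e ∈ G'', ¬e.IsDiag) (hN : ∀ e ∈ N, ¬e.IsDiag)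
    (k m : ℕ) (hm : k + 1 ≤ m) (F : ℕ → Multiset (Sym2 V))
    (hF : IsMSFD G'' m F)
    (hsmall : mEdgeConn (N + ∑ i ∈ Finset.Icc 1 (k + 1), F i) ≤ k) :
    mEdgeConn (G'' + N) = mEdgeConn (N + ∑ i ∈ Finset.Icc 1 (k + 1), F i) ∧
    ∀ A : Set V, A.Nonempty → Aᶜ.Nonempty →
      mCut (N + ∑ i ∈ Finset.Icc 1 (k + 1), F i) A =
        mEdgeConn (N + ∑ i ∈ Finset.Icc 1 (k + 1), F i) →
      mCut (G'' + N) A = mCut (N + ∑ i ∈ Finset.Icc 1 (k + 1), F i) A :=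
  msfd_edgeConn_eq_general G'' N k m hm F hF hsmall
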